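/- Soundness of the CEGAR refinement: for a Boolean network f and a marker M, if all minimal trap spaces of f match M, then for every configuration x that does not match M there exists a configuration y ∈ c(TS_f(x)) such that c(TS_f(y)) ⊊ c(TS_f(x)) and TS_f(y) matches M. -/

import Mathlib

/-- The set of vertices of a subcube `h : Fin n → Option Bool`. -/
def vertices {n : ℕ} (h : Fin n → Option Bool) : Set (Fin n → Bool) :=
  {x | ∀ (i : Fin n) (b : Bool), h i = some b → x i = b}

/-- A subcube `h` is a trap space of the Boolean network `f` if it is closed by `f`. -/
def IsTrapSpace {n : ℕ} (f : (Fin n → Bool) → (Fin n → Bool))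
    (h : Fin n → Option Bool) : Prop :=
  ∀ x ∈ vertices h, f x ∈ vertices h

/-- A trap space is minimal if no trap space has a strictly smaller vertex set. -/
def IsMinimalTrapSpace {n : ℕ} (f : (Fin n → Bool) → (Fin n → Bool))
    (h : Fin n → Option Bool) : Prop :=
  IsTrapSpace f h ∧ ∀ h', IsTrapSpace f h' → ¬ (vertices h' ⊂ vertices h)

/-- `h` is the smallest trap space of `f` containing the configuration `x` (i.e. `TS_f(x)`). -/
def IsSmallestTrapSpace {n : ℕ} (f : (Fin n → Bool) → (Fin n → Bool))
    (x : Fin n → Bool) (h : Fin n → Option Bool) : Prop :=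
  IsTrapSpace f h ∧ x ∈ vertices h ∧
    ∀ h', IsTrapSpace f h' → x ∈ vertices h' → vertices h ⊆ vertices h'

/-- A configuration `x` matches a marker `M`. -/
def confMatches {n : ℕ} (x : Fin n → Bool) (M : Fin n → Option Bool) : Prop :=
  ∀ (i : Fin n) (b : Bool), M i = some b → x i = b

/-- A subcube `h` matches a marker `M`. -/
def subcubeMatches {n : ℕ} (h M : Fin n → Option Bool) : Prop :=
  ∀ (i : Fin n) (b : Bool), M i = some b → h i = some b

/-- The perturbed Boolean network `f/P`. -/
def perturb {n : ℕ} (f : (Fin n → Bool) → (Fin n → Bool))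
    (P : Fin n → Option Bool) : (Fin n → Bool) → (Fin n → Bool) :=
  fun x i => (P i).getD (f x i)

/-
Trap spaces containing a common configuration are closed under intersection, so
`TS_f(y)` exists for every `y`, and inside a minimal trap space `m` it is `m` itself. Take a
minimal trap space `m ⊆ TS_f(x)` and any `y ∈ c(m)`: then `TS_f(y) = m` matches `M`, and `m` is
strictly smaller than `TS_f(x)`, since otherwise `x ∈ c(m)` would match `M`.
-/

section TrapSpaces

variable {n : ℕ} {f : (Fin n → Bool) → (Fin n → Bool)}

theorem vertices_nonempty (h : Fin n → Option Bool) : (vertices h).Nonempty :=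
  ⟨fun i => (h i).getD true, fun i b hi => by simp [hi]⟩

theorem vertices_none : vertices (fun _ : Fin n => (none : Option Bool)) = Set.univ := by
  simp [vertices]

theorem confMatches_of_subcubeMatches {h M : Fin n → Option Bool} {x : Fin n → Bool}
    (hM : subcubeMatches h M) (hx : x ∈ vertices h) : confMatches x M :=
  fun i b hi => hx i b (hM i b hi)

/-- Two subcubes sharing a vertex agree wherever both fix a coordinate. -/
theorem vertices_or {h g : Fin n → Option Bool} {y : Fin n → Bool}
    (hyh : y ∈ vertices h) (hyg : y ∈ vertices g) :
    vertices (fun i => (h i).or (g i)) = vertices h ∩ vertices g := by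
  ext z
  simp only [vertices, Set.mem_ofPred_eq, Set.mem_inter_iff, ← forall_and]
  refine forall_congr' fun i => ?_
  cases hi : h i with
  | none => simp
  | some a =>
    have hga : ∀ b, g i = some b → b = a := fun b hb => (hyg i b hb).symm.trans (hyh i a hi)
    simp only [Option.some_or, Option.some.injEq, forall_and, forall_eq']
    exact ⟨fun hz => ⟨hz, fun b hb => hga b hb ▸ hz⟩, And.left⟩

theorem isTrapSpace_or {h g : Fin n → Option Bool} {y : Fin n → Bool}
    (hh : IsTrapSpace f h) (hg : IsTrapSpace f g)
    (hyh : y ∈ vertices h) (hyg : y ∈ vertices g) :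
    IsTrapSpace f (fun i => (h i).or (g i)) := by
  intro z hz
  rw [vertices_or hyh hyg] at hz ⊢
  exact ⟨hh z hz.1, hg z hz.2⟩

theorem exists_isMinimalTrapSpace_subset {h : Fin n → Option Bool} (hh : IsTrapSpace f h) :
    ∃ m, IsMinimalTrapSpace f m ∧ vertices m ⊆ vertices h := by
  -- `⊂` is well founded on `Set (Fin n → Bool)`, a finite type.
  obtain ⟨m, ⟨hm, hmh⟩, hmin⟩ :=
    exists_minimalFor_of_wellFoundedLT (fun g => IsTrapSpace f g ∧ vertices g ⊆ vertices h)
      vertices ⟨h, hh, le_rfl⟩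
  exact ⟨m, ⟨hm, fun g hg hgm => hgm.not_ge (hmin ⟨hg, hgm.subset.trans hmh⟩ hgm.subset)⟩, hmh⟩

theorem exists_isSmallestTrapSpace (f : (Fin n → Bool) → (Fin n → Bool)) (y : Fin n → Bool) :
    ∃ t, IsSmallestTrapSpace f y t := by
  have htop : IsTrapSpace f (fun _ => none) ∧ y ∈ vertices (fun _ => none) := by
    simp [IsTrapSpace, vertices_none]
  obtain ⟨t, ⟨ht, hyt⟩, hmin⟩ :=
    exists_minimalFor_of_wellFoundedLT (fun g => IsTrapSpace f g ∧ y ∈ vertices g) vertices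
      ⟨_, htop⟩
  refine ⟨t, ht, hyt, fun g hg hyg => ?_⟩
  have hmeet := vertices_or hyt hyg
  calc vertices t ⊆ vertices (fun i => (t i).or (g i)) :=
        hmin ⟨isTrapSpace_or ht hg hyt hyg, hmeet ▸ ⟨hyt, hyg⟩⟩ (hmeet ▸ Set.inter_subset_left)
    _ ⊆ vertices g := hmeet ▸ Set.inter_subset_right

theorem IsSmallestTrapSpace.vertices_eq_of_isMinimalTrapSpace {y : Fin n → Bool}
    {t m : Fin n → Option Bool} (ht : IsSmallestTrapSpace f y t) (hm : IsMinimalTrapSpace f m)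
    (hy : y ∈ vertices m) : vertices t = vertices m :=
  (ht.2.2 m hm.1 hy).eq_of_not_ssubset (hm.2 t ht.1)

theorem IsMinimalTrapSpace.of_vertices_eq {t m : Fin n → Option Bool}
    (hm : IsMinimalTrapSpace f m) (ht : IsTrapSpace f t) (htm : vertices t = vertices m) :
    IsMinimalTrapSpace f t :=
  ⟨ht, fun g hg hgt => hm.2 g hg (htm ▸ hgt)⟩

end TrapSpaces

/-- soundness of the CEGAR refinement. -/
theorem cegar_refinement_sound {n : ℕ}
    (f : (Fin n → Bool) → (Fin n → Bool)) (M : Fin n → Option Bool)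
    (hall : ∀ h : Fin n → Option Bool, IsMinimalTrapSpace f h → subcubeMatches h M)
    (x : Fin n → Bool) (hx : ¬ confMatches x M)
    (tsx : Fin n → Option Bool) (htsx : IsSmallestTrapSpace f x tsx) :
    ∃ y ∈ vertices tsx, ∃ tsy : Fin n → Option Bool,
      IsSmallestTrapSpace f y tsy ∧ vertices tsy ⊂ vertices tsx ∧
        subcubeMatches tsy M := by
  obtain ⟨m, hm, hmx⟩ := exists_isMinimalTrapSpace_subset htsx.1
  obtain ⟨y, hy⟩ := vertices_nonempty m
  obtain ⟨tsy, htsy⟩ := exists_isSmallestTrapSpace f y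
  have htsym : vertices tsy = vertices m := htsy.vertices_eq_of_isMinimalTrapSpace hm hy
  have hmx_ne : vertices m ≠ vertices tsx := fun heq =>
    hx (confMatches_of_subcubeMatches (hall m hm) (heq ▸ htsx.2.1))
  exact ⟨y, hmx hy, tsy, htsy, htsym ▸ hmx.ssubset_of_ne hmx_ne,
    hall tsy (hm.of_vertices_eq htsy.1 htsym)⟩
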